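/- arXiv:0904.4304 — 2 statements merged into one kernel-verified Lean document; each statement's English description precedes it below -/
import Mathlib

section
/- Let T ∈ M_n(k') be invertible hermitian and let b = [[β, γ],[0, β^{*−1}]] ∈ GL_{2n}(k') (n×n blocks), where β ∈ GL_n(k') is upper triangular with diagonal entries β_1,…,β_n and γ ∈ M_n(k') is arbitrary; in particular b may be any element of the Borel subgroup B = {[[β,0],[0,β^{*−1}]]·[[1_n,a],[0,1_n]] : β upper triangular invertible, a + a* = 0} of U(H_n). Then for every x ∈ M_{2n,n}(k') and every 1 ≤ i ≤ n: f_{T,i}(b·x) = (∏_{j=1}^{i} N(β_j))^{−1} · f_{T,i}(x). -/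
/-! The lower block of `b * x` is `L * x₂` with `L = (β*)⁻¹` lower triangular, so `b` replaces
`x₂ T⁻¹ x₂*` by `L (x₂ T⁻¹ x₂*) L*`. A leading principal minor is multiplicative when the left
factor is lower or the right factor upper triangular, so `d_i` gets multiplied by
`d_i(L) · d_i(L)* = (∏_{j ≤ i} N(β_j))⁻¹`, the minors of a triangular matrix being the products of
its diagonal entries. -/

open Matrix
noncomputable section

/-- Conjugate transpose of a matrix with respect to an involution `conj` of the field. -/
def ctr {k' : Type} [Field k'] (conj : k' ≃+* k') {m l : Type} (A : Matrix m l k') :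
    Matrix l m k' := fun i j => conj (A j i)

/-- The lower `n × n` block of a `2n × n` matrix. -/
def lowerBlock {k' : Type} [Field k'] {n : ℕ} (x : Matrix (Fin n ⊕ Fin n) (Fin n) k') :
    Matrix (Fin n) (Fin n) k' := fun i j => x (Sum.inr i) j

/-- `d_i(y)` : determinant of the upper left `i × i` block of `y`. -/
def dmin {k' : Type} [Field k'] {n : ℕ} (i : ℕ) (hi : i ≤ n)
    (y : Matrix (Fin n) (Fin n) k') : k' :=
  (y.submatrix (Fin.castLE hi) (Fin.castLE hi)).det

/-- The relative invariant `f_{T,i}(x) = d_i(x₂ T⁻¹ x₂*)`. -/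
def fTi {k' : Type} [Field k'] (conj : k' ≃+* k') {n : ℕ}
    (T : Matrix (Fin n) (Fin n) k') (x : Matrix (Fin n ⊕ Fin n) (Fin n) k')
    (i : ℕ) (hi : i ≤ n) : k' :=
  dmin i hi (lowerBlock x * T⁻¹ * ctr conj (lowerBlock x))

section LeadingMinor

variable {R : Type} [Field R] {n i : ℕ} (hi : i ≤ n)

theorem submatrix_castLE_mul (A B : Matrix (Fin n) (Fin n) R)
    (h : ∀ p q : Fin i, ∀ a : Fin n, i ≤ a → A (Fin.castLE hi p) a * B a (Fin.castLE hi q) = 0) :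
    (A * B).submatrix (Fin.castLE hi) (Fin.castLE hi) =
      A.submatrix (Fin.castLE hi) (Fin.castLE hi) *
        B.submatrix (Fin.castLE hi) (Fin.castLE hi) := by
  ext p q
  simp only [mul_apply, submatrix_apply]
  calc ∑ a, A (Fin.castLE hi p) a * B a (Fin.castLE hi q)
      = ∑ a ∈ Finset.univ.map (Fin.castLEEmb hi),
          A (Fin.castLE hi p) a * B a (Fin.castLE hi q) := by
        refine (Finset.sum_subset (Finset.subset_univ _) fun a _ ha => h p q a ?_).symm
        by_contra! hai
        exact ha (Finset.mem_map.mpr ⟨⟨a, hai⟩, Finset.mem_univ _, rfl⟩)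
    _ = _ := Finset.sum_map _ _ _

theorem dmin_mul_of_isLowerTriangular {A : Matrix (Fin n) (Fin n) R} (hA : A.IsLowerTriangular)
    (B : Matrix (Fin n) (Fin n) R) : dmin i hi (A * B) = dmin i hi A * dmin i hi B := by
  rw [dmin, submatrix_castLE_mul hi A B fun p _ a ha => ?_, det_mul, dmin, dmin]
  rw [hA (show OrderDual.toDual a < OrderDual.toDual (Fin.castLE hi p) from
    OrderDual.toDual_lt_toDual.mpr (Fin.lt_def.mpr (p.isLt.trans_le ha))), zero_mul]

theorem dmin_mul_of_isUpperTriangular (A : Matrix (Fin n) (Fin n) R) {B : Matrix (Fin n) (Fin n) R}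
    (hB : B.IsUpperTriangular) : dmin i hi (A * B) = dmin i hi A * dmin i hi B := by
  rw [dmin, submatrix_castLE_mul hi A B fun _ q a ha => ?_, det_mul, dmin, dmin]
  rw [hB (show id (Fin.castLE hi q) < id a from Fin.lt_def.mpr (q.isLt.trans_le ha)), mul_zero]

theorem dmin_one : dmin i hi (1 : Matrix (Fin n) (Fin n) R) = 1 := by
  rw [dmin, submatrix_one _ (Fin.castLE_injective hi), det_one]

theorem dmin_of_isUpperTriangular {A : Matrix (Fin n) (Fin n) R} (hA : A.IsUpperTriangular) :
    dmin i hi A = ∏ j ∈ Finset.univ.filter (fun j : Fin n => (j : ℕ) < i), A j j := by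
  have hfilter : Finset.univ.filter (fun j : Fin n => (j : ℕ) < i) =
      Finset.univ.map (Fin.castLEEmb hi) := by
    ext j
    simp only [Finset.mem_filter, Finset.mem_univ, true_and, Finset.mem_map, Fin.castLEEmb_apply]
    exact ⟨fun hj => ⟨⟨j, hj⟩, rfl⟩, by rintro ⟨j, rfl⟩; exact j.isLt⟩
  have hsub : (A.submatrix (Fin.castLE hi) (Fin.castLE hi)).IsUpperTriangular :=
    fun _ _ hpq => hA hpq
  rw [hfilter, Finset.prod_map, dmin, det_of_isUpperTriangular hsub]
  rfl

end LeadingMinor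

section ConjTranspose

variable {k' : Type} [Field k'] (conj : k' ≃+* k')

theorem ctr_eq_transpose_map {m l : Type} (A : Matrix m l k') : ctr conj A = (A.map conj)ᵀ := rfl

theorem ctr_mul {m l p : Type} [Fintype l] (A : Matrix m l k') (B : Matrix l p k') :
    ctr conj (A * B) = ctr conj B * ctr conj A := by
  rw [ctr_eq_transpose_map, Matrix.map_mul, transpose_mul, ← ctr_eq_transpose_map,
    ← ctr_eq_transpose_map]

theorem Matrix.IsUpperTriangular.ctr {n : ℕ} {A : Matrix (Fin n) (Fin n) k'}
    (hA : A.IsUpperTriangular) :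
    (ctr conj A).IsLowerTriangular :=
  (hA.map conj).transpose

theorem Matrix.IsLowerTriangular.ctr {n : ℕ} {A : Matrix (Fin n) (Fin n) k'}
    (hA : A.IsLowerTriangular) :
    (ctr conj A).IsUpperTriangular :=
  (hA.map conj).transpose

theorem det_ctr {n : ℕ} (A : Matrix (Fin n) (Fin n) k') : (ctr conj A).det = conj A.det := by
  rw [ctr_eq_transpose_map, det_transpose]
  exact (RingHom.map_det (conj : k' →+* k') A).symm

theorem dmin_ctr {n i : ℕ} (hi : i ≤ n) (A : Matrix (Fin n) (Fin n) k') :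
    dmin i hi (ctr conj A) = conj (dmin i hi A) :=
  det_ctr conj _

theorem dmin_mul_mul_ctr {n i : ℕ} (hi : i ≤ n) {L : Matrix (Fin n) (Fin n) k'}
    (hL : L.IsLowerTriangular) (M : Matrix (Fin n) (Fin n) k') :
    dmin i hi (L * M * ctr conj L) = dmin i hi L * conj (dmin i hi L) * dmin i hi M := by
  rw [dmin_mul_of_isUpperTriangular hi _ (IsLowerTriangular.ctr conj hL),
    dmin_mul_of_isLowerTriangular hi hL, dmin_ctr]
  ring

end ConjTranspose

theorem lowerBlock_fromBlocks_zero_mul {R : Type} [Field R] {n : ℕ}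
    (A B D : Matrix (Fin n) (Fin n) R) (x : Matrix (Fin n ⊕ Fin n) (Fin n) R) :
    lowerBlock (fromBlocks A B 0 D * x) = D * lowerBlock x := by
  ext p q
  simp [lowerBlock, mul_apply, Fintype.sum_sum_type]

theorem stmt1_general {k' : Type} [Field k']
    (conj : k' ≃+* k') (hinvol : ∀ a, conj (conj a) = a)
    (n : ℕ) (T : Matrix (Fin n) (Fin n) k')
    (β : Matrix (Fin n) (Fin n) k') (hβut : β.BlockTriangular (id : Fin n → Fin n))
    (hβinv : IsUnit β.det)
    (γ : Matrix (Fin n) (Fin n) k')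
    (b : Matrix (Fin n ⊕ Fin n) (Fin n ⊕ Fin n) k')
    (hb : b = Matrix.fromBlocks β γ 0 (ctr conj β)⁻¹) :
    ∀ (x : Matrix (Fin n ⊕ Fin n) (Fin n) k') (i : ℕ) (hi1 : 1 ≤ i) (hi : i ≤ n),
      fTi conj T (b * x) i hi =
        (∏ j ∈ Finset.univ.filter (fun j : Fin n => (j : ℕ) < i), (β j j * conj (β j j)))⁻¹ * fTi conj T x i hi := by
  intro x i _ hi
  have : Invertible (ctr conj β) :=
    invertibleOfIsUnitDet _ (by rw [det_ctr]; exact hβinv.map conj)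
  set L := (ctr conj β)⁻¹
  have hL : L.IsLowerTriangular :=
    blockTriangular_inv_of_blockTriangular (IsUpperTriangular.ctr conj hβut)
  have hdL : dmin i hi L = (conj (dmin i hi β))⁻¹ := by
    refine eq_inv_of_mul_eq_one_left ?_
    rw [← dmin_ctr, ← dmin_mul_of_isLowerTriangular hi hL, inv_mul_of_invertible, dmin_one]
  calc fTi conj T (b * x) i hi
      = dmin i hi (L * (lowerBlock x * T⁻¹ * ctr conj (lowerBlock x)) * ctr conj L) := by
        rw [fTi, hb, lowerBlock_fromBlocks_zero_mul, ctr_mul]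
        simp only [Matrix.mul_assoc]
    _ = (conj (dmin i hi β))⁻¹ * (dmin i hi β)⁻¹ * fTi conj T x i hi := by
        rw [dmin_mul_mul_ctr conj hi hL, hdL, map_inv₀, hinvol, fTi]
    _ = _ := by
        rw [dmin_of_isUpperTriangular hi hβut, map_prod, Finset.prod_mul_distrib, mul_inv]
        ring

/-- `f_{T,i}` is a relative `B`-invariant:
`f_{T,i}(b·x) = (∏_{j=1}^i N(β_j))⁻¹ · f_{T,i}(x)` for `b = [[β,γ],[0,β^{*-1}]]`. -/
theorem stmt1 {k' : Type} [Field k']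
    (conj : k' ≃+* k') (hinvol : ∀ a, conj (conj a) = a) (hne : ∃ a, conj a ≠ a)
    (n : ℕ) (T : Matrix (Fin n) (Fin n) k')
    (hherm : ctr conj T = T) (hTinv : IsUnit T.det)
    (β : Matrix (Fin n) (Fin n) k') (hβut : β.BlockTriangular (id : Fin n → Fin n))
    (hβinv : IsUnit β.det)
    (γ : Matrix (Fin n) (Fin n) k')
    (b : Matrix (Fin n ⊕ Fin n) (Fin n ⊕ Fin n) k')
    (hb : b = Matrix.fromBlocks β γ 0 (ctr conj β)⁻¹) :
    ∀ (x : Matrix (Fin n ⊕ Fin n) (Fin n) k') (i : ℕ) (hi1 : 1 ≤ i) (hi : i ≤ n),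
      fTi conj T (b * x) i hi =
        (∏ j ∈ Finset.univ.filter (fun j : Fin n => (j : ℕ) < i), (β j j * conj (β j j)))⁻¹ * fTi conj T x i hi :=
  stmt1_general conj hinvol n T β hβut hβinv γ b hb
end
end

section
/- For every invertible hermitian T ∈ M_n(k'), the set 𝔛_T(O_{k'}) := 𝔛_T ∩ M_{2n,n}(O_{k'}) is a finite (possibly empty) union of K-orbits: there exist finitely many x_1,…,x_r ∈ 𝔛_T(O_{k'}) such that 𝔛_T(O_{k'}) = K·x_1 ∪ ⋯ ∪ K·x_r. -/
open Matrix
noncomputable section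

/-- The split hermitian form `H_n = [[0,1_n],[1_n,0]]`. -/
def Hmat (k' : Type) [Field k'] (n : ℕ) : Matrix (Fin n ⊕ Fin n) (Fin n ⊕ Fin n) k' :=
  Matrix.fromBlocks 0 1 1 0

/-- `K = U(H_n) ∩ GL_{2n}(O_{k'})`. -/
def inK {k' : Type} [Field k'] (conj : k' ≃+* k') (v : k' → ℤ) {n : ℕ}
    (g : Matrix (Fin n ⊕ Fin n) (Fin n ⊕ Fin n) k') : Prop :=
  (∀ i j, g i j = 0 ∨ 0 ≤ v (g i j)) ∧
    ctr conj g * Hmat k' n * g = Hmat k' n ∧ IsUnit g.det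

/-- `𝔛_T(O_{k'})` : integral points of `𝔛_T`. -/
def inXTO {k' : Type} [Field k'] (conj : k' ≃+* k') (v : k' → ℤ) {n : ℕ}
    (T : Matrix (Fin n) (Fin n) k') (x : Matrix (Fin n ⊕ Fin n) (Fin n) k') : Prop :=
  (∀ i j, x i j = 0 ∨ 0 ≤ v (x i j)) ∧ ctr conj x * Hmat k' n * x = T

/-! Fix `t` with `π ^ t T⁻¹` integral. If `x, y ∈ 𝔛_T(O_{k'})` are congruent modulo
`π ^ (9t+1)`, then `y ∈ K x`: the matrix `u₀ = 1 + (y - x) T⁻¹ x* H` maps `x` to `y` and is an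
isometry of `H` modulo `π ^ (8t+1)`, and the Newton iteration `u ↦ u (1 - H M)`, where
`M x = 0` and `M + M* = u* H u - H`, keeps `u x = y` while gaining one power of `π` in the defect;
its limit lies in `K`. Solving `M + M* = Δ` with a controlled denominator needs an integral `θ` with
`θ + θ* = 1`; it exists because otherwise `b ↦ b* b` would embed the residue field of `k'` into
that of `k`, so every integral element would be a limit of `*`-fixed ones and `*` would be trivial.
Since the residue field is finite, `𝔛_T(O_{k'})` is covered by finitely many classes modulo
`π ^ (9t+1)`, hence by finitely many `K`-orbits. -/

open scoped Pointwise

variable {k : Type} [Field k]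

/-- `v` restricted to `kˣ` is a discrete valuation; its value at `0` is irrelevant. -/
class IsIntValuation (v : k → ℤ) : Prop where
  map_mul_of_ne_zero : ∀ a b : k, a ≠ 0 → b ≠ 0 → v (a * b) = v a + v b
  min_le_map_add : ∀ a b : k, a ≠ 0 → b ≠ 0 → a + b ≠ 0 → min (v a) (v b) ≤ v (a + b)

/-- `a ∈ π ^ m O`, reading `v 0` as `+∞`. -/
def ValGe (v : k → ℤ) (m : ℤ) (a : k) : Prop := a = 0 ∨ m ≤ v a

namespace IsIntValuation

variable {v : k → ℤ} [IsIntValuation v]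

theorem map_one : v 1 = 0 := by
  have := map_mul_of_ne_zero (v := v) 1 1 one_ne_zero one_ne_zero
  rw [mul_one] at this
  omega

theorem map_inv {a : k} (ha : a ≠ 0) : v a⁻¹ = -v a := by
  have := map_mul_of_ne_zero (v := v) a a⁻¹ ha (inv_ne_zero ha)
  rw [mul_inv_cancel₀ ha, map_one (v := v)] at this
  omega

theorem map_neg {a : k} (ha : a ≠ 0) : v (-a) = v a := by
  have h := map_mul_of_ne_zero (v := v) (-1) (-1) (by simp) (by simp)
  have := map_mul_of_ne_zero (v := v) (-1) a (by simp) ha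
  rw [neg_mul_neg, one_mul, map_one (v := v)] at h
  rw [neg_one_mul] at this
  omega

end IsIntValuation

namespace ValGe

variable {v : k → ℤ} {m l : ℤ} {a b : k}

theorem zero : ValGe v m 0 := Or.inl rfl

theorem mono (h : l ≤ m) (ha : ValGe v m a) : ValGe v l a := ha.imp_right h.trans

theorem conj {conj : k ≃+* k} (hvconj : ∀ a, v (conj a) = v a) (ha : ValGe v m a) :
    ValGe v m (conj a) :=
  ha.imp (fun h => by rw [h, map_zero]) fun h => (hvconj a).symm ▸ h

variable [IsIntValuation v]

theorem one (hm : m ≤ 0) : ValGe v m 1 := Or.inr (IsIntValuation.map_one (v := v) ▸ hm)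

theorem neg (ha : ValGe v m a) : ValGe v m (-a) := by
  rcases eq_or_ne a 0 with rfl | ha0
  · rw [neg_zero]; exact zero
  · exact Or.inr (by rw [IsIntValuation.map_neg (v := v) ha0]; exact ha.resolve_left ha0)

theorem add (ha : ValGe v m a) (hb : ValGe v m b) : ValGe v m (a + b) := by
  rcases eq_or_ne a 0 with rfl | ha0
  · rwa [zero_add]
  rcases eq_or_ne b 0 with rfl | hb0
  · rwa [add_zero]
  rcases eq_or_ne (a + b) 0 with hab | hab
  · exact Or.inl hab
  · exact Or.inr ((le_min (ha.resolve_left ha0) (hb.resolve_left hb0)).trans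
      (IsIntValuation.min_le_map_add a b ha0 hb0 hab))

theorem sub (ha : ValGe v m a) (hb : ValGe v m b) : ValGe v m (a - b) := by
  rw [sub_eq_add_neg]
  exact ha.add hb.neg

theorem mul (ha : ValGe v m a) (hb : ValGe v l b) : ValGe v (m + l) (a * b) := by
  rcases eq_or_ne a 0 with rfl | ha0
  · rw [zero_mul]; exact zero
  rcases eq_or_ne b 0 with rfl | hb0
  · rw [mul_zero]; exact zero
  refine Or.inr ?_
  rw [IsIntValuation.map_mul_of_ne_zero (v := v) a b ha0 hb0]
  exact add_le_add (ha.resolve_left ha0) (hb.resolve_left hb0)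

theorem sum {ι : Type*} (s : Finset ι) {f : ι → k} (h : ∀ i ∈ s, ValGe v m (f i)) :
    ValGe v m (∑ i ∈ s, f i) :=
  Finset.sum_induction f (ValGe v m) (fun _ _ => add) zero h

end ValGe

theorem eq_zero_of_forall_valGe {v : k → ℤ} {a : k} (h : ∀ m : ℕ, ValGe v m a) : a = 0 :=
  (h ((v a).toNat + 1)).resolve_right fun h' => by
    have := Int.self_le_toNat (v a)
    push_cast at h'
    omega

theorem valGe_one_of_mul_self {v : k → ℤ} [IsIntValuation v] {a : k}
    (h : ValGe v 1 (a * a)) : ValGe v 1 a := by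
  rcases eq_or_ne a 0 with rfl | ha
  · exact .zero
  have := h.resolve_left (mul_ne_zero ha ha)
  rw [IsIntValuation.map_mul_of_ne_zero (v := v) a a ha ha] at this
  exact Or.inr (by omega)

section ConjTranspose

variable {conj : k ≃+* k} {ι κ ν : Type}

theorem ctr_eq_transpose_map_s19 (A : Matrix ι κ k) : ctr conj A = (A.map conj)ᵀ := rfl

theorem ctr_add (A B : Matrix ι κ k) : ctr conj (A + B) = ctr conj A + ctr conj B := by
  ext; simp [ctr]

theorem ctr_sub (A B : Matrix ι κ k) : ctr conj (A - B) = ctr conj A - ctr conj B := by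
  ext; simp [ctr]

theorem ctr_neg (A : Matrix ι κ k) : ctr conj (-A) = -ctr conj A := by
  ext; simp [ctr]

theorem ctr_one [DecidableEq ι] : ctr conj (1 : Matrix ι ι k) = 1 := by
  simp [ctr_eq_transpose_map_s19]

theorem ctr_mul_s19 [Fintype κ] (A : Matrix ι κ k) (B : Matrix κ ν k) :
    ctr conj (A * B) = ctr conj B * ctr conj A := by
  simp only [ctr_eq_transpose_map_s19, Matrix.map_mul, Matrix.transpose_mul]

theorem ctr_ctr (hinvol : ∀ a, conj (conj a) = a) (A : Matrix ι κ k) :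
    ctr conj (ctr conj A) = A := by
  ext; simp [ctr, hinvol]

theorem ctr_ctr_mul_mul [Fintype ι] (hinvol : ∀ a, conj (conj a) = a) {Δ : Matrix ι ι k}
    (hΔ : ctr conj Δ = Δ) (A : Matrix ι κ k) :
    ctr conj (ctr conj A * Δ * A) = ctr conj A * Δ * A := by
  rw [ctr_mul_s19, ctr_mul_s19, ctr_ctr hinvol, hΔ, Matrix.mul_assoc]

theorem ctr_Hmat {n : ℕ} : ctr conj (Hmat k n) = Hmat k n := by
  ext (i | i) (j | j) <;> simp [ctr, Hmat, Matrix.one_apply, apply_ite, eq_comm]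

theorem Hmat_mul_Hmat {n : ℕ} : Hmat k n * Hmat k n = 1 := by
  simp [Hmat, Matrix.fromBlocks_multiply, ← Matrix.fromBlocks_one]

theorem isUnit_det_of_ctr_mul_mul_eq [Fintype ι] [DecidableEq ι] {H g : Matrix ι ι k}
    (hHH : H * H = 1) (hg : ctr conj g * H * g = H) : IsUnit g.det :=
  Matrix.isUnit_det_of_left_inverse (B := H * ctr conj g * H) <| by
    rw [show H * ctr conj g * H * g = H * (ctr conj g * H * g) by simp only [Matrix.mul_assoc],
      hg, hHH]

end ConjTranspose

def MatValGe {ι κ : Type} (v : k → ℤ) (m : ℤ) (A : Matrix ι κ k) : Prop :=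
  ∀ i j, ValGe v m (A i j)

namespace MatValGe

variable {v : k → ℤ} {m l : ℤ} {ι κ ν : Type} {A B : Matrix ι κ k}

theorem zero : MatValGe v m (0 : Matrix ι κ k) := fun _ _ => .zero

theorem mono (h : l ≤ m) (hA : MatValGe v m A) : MatValGe v l A := fun i j => (hA i j).mono h

theorem ctr {conj : k ≃+* k} (hvconj : ∀ a, v (conj a) = v a) (hA : MatValGe v m A) :
    MatValGe v m (ctr conj A) := fun i j => (hA j i).conj hvconj

theorem eq_zero (hA : ∀ m : ℕ, MatValGe v m A) : A = 0 :=
  Matrix.ext fun i j => eq_zero_of_forall_valGe fun m => hA m i j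

variable [IsIntValuation v]

theorem add (hA : MatValGe v m A) (hB : MatValGe v m B) : MatValGe v m (A + B) :=
  fun i j => (hA i j).add (hB i j)

theorem neg (hA : MatValGe v m A) : MatValGe v m (-A) := fun i j => (hA i j).neg

theorem sub (hA : MatValGe v m A) (hB : MatValGe v m B) : MatValGe v m (A - B) :=
  fun i j => (hA i j).sub (hB i j)

theorem mul [Fintype κ] {C : Matrix κ ν k} (hA : MatValGe v m A) (hC : MatValGe v l C) :
    MatValGe v (m + l) (A * C) :=
  fun i j => ValGe.sum _ fun s _ => (hA i s).mul (hC s j)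

theorem one [DecidableEq ι] (hm : m ≤ 0) : MatValGe v m (1 : Matrix ι ι k) := fun i j => by
  rw [Matrix.one_apply]
  split_ifs
  exacts [.one hm, .zero]

theorem Hmat {n : ℕ} (hm : m ≤ 0) : MatValGe v m (Hmat k n) := by
  rintro (i | i) (j | j) <;>
    simp only [_root_.Hmat, Matrix.fromBlocks_apply₁₁, Matrix.fromBlocks_apply₁₂,
      Matrix.fromBlocks_apply₂₁, Matrix.fromBlocks_apply₂₂]
  exacts [zero i j, one hm i j, one hm i j, zero i j]

end MatValGe

theorem exists_matValGe_neg {v : k → ℤ} {ι κ : Type} [Finite ι] [Finite κ] (A : Matrix ι κ k) :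
    ∃ t : ℕ, MatValGe v (-t) A := by
  obtain ⟨t, ht⟩ := Finite.exists_le fun p : ι × κ => (v (A p.1 p.2)).natAbs
  exact ⟨t, fun i j => Or.inr (by have := ht (i, j); dsimp only at this; omega)⟩

def IsValComplete (v : k → ℤ) : Prop :=
  ∀ f : ℕ → k, (∀ m : ℕ, ∃ N : ℕ, ∀ i ≥ N, ∀ j ≥ N, ValGe v m (f i - f j)) →
    ∃ L : k, ∀ m : ℕ, ∃ N : ℕ, ∀ i ≥ N, ValGe v m (f i - L)

section Limits

variable {v : k → ℤ} [IsIntValuation v]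

theorem valGe_sub_of_forall_succ {f : ℕ → k} (hf : ∀ j : ℕ, ValGe v j (f (j + 1) - f j))
    {j i : ℕ} (hji : j ≤ i) : ValGe v j (f i - f j) := by
  induction i, hji using Nat.le_induction with
  | base => rw [sub_self]; exact .zero
  | succ i hji ih =>
    rw [← sub_add_sub_cancel (f (i + 1)) (f i)]
    exact ((hf i).mono (by exact_mod_cast hji)).add ih

theorem IsValComplete.exists_limit (hc : IsValComplete v) {f : ℕ → k}
    (hf : ∀ j : ℕ, ValGe v j (f (j + 1) - f j)) : ∃ L, ∀ j : ℕ, ValGe v j (f j - L) := by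
  obtain ⟨L, hL⟩ := hc f fun m => ⟨m, fun i hi j hj => by
    rw [← sub_sub_sub_cancel_right (f i) (f j) (f m)]
    exact (valGe_sub_of_forall_succ hf hi).sub (valGe_sub_of_forall_succ hf hj)⟩
  refine ⟨L, fun j => ?_⟩
  obtain ⟨N, hN⟩ := hL j
  rw [← sub_add_sub_cancel (f j) (f (max j N)) L, ← neg_sub]
  exact (valGe_sub_of_forall_succ hf (le_max_left j N)).neg.add (hN _ (le_max_right j N))

theorem IsValComplete.exists_matrix_limit {ι κ : Type} (hc : IsValComplete v)
    {A : ℕ → Matrix ι κ k} (hA : ∀ j : ℕ, MatValGe v j (A (j + 1) - A j)) :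
    ∃ L, ∀ j : ℕ, MatValGe v j (A j - L) := by
  choose L hL using fun a b => hc.exists_limit (f := fun j => A j a b) fun j => hA j a b
  exact ⟨Matrix.of L, fun j a b => hL a b j⟩

end Limits

/-- The sums `∑_{i < N} c_i π^i` with all digits `c_i ∈ A`. -/
def digitSums (A : Set k) (π : k) : ℕ → Set k
  | 0 => {0}
  | N + 1 => A + π • digitSums A π N

section Digits

variable {v : k → ℤ} [IsIntValuation v] {π : k} {A : Set k}

theorem exists_mem_digitSums_valGe (hπ0 : π ≠ 0) (hπ : v π = 1)
    (hA : ∀ a, ValGe v 0 a → ∃ c ∈ A, ValGe v 1 (a - c)) (N : ℕ) {a : k} (ha : ValGe v 0 a) :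
    ∃ c ∈ digitSums A π N, ValGe v N (a - c) := by
  induction N generalizing a with
  | zero => exact ⟨0, rfl, by simpa using ha⟩
  | succ N ih =>
    obtain ⟨c, hcA, hac⟩ := hA a ha
    have hπinv : ValGe v (-1) π⁻¹ := Or.inr (by rw [IsIntValuation.map_inv (v := v) hπ0, hπ])
    obtain ⟨d, hd, hd'⟩ := ih (a := (a - c) * π⁻¹) ((hac.mul hπinv).mono (by norm_num))
    refine ⟨c + π • d, Set.add_mem_add hcA (Set.smul_mem_smul_set hd), ?_⟩
    have hπ1 : ValGe v 1 π := Or.inr hπ.ge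
    rw [show a - (c + π • d) = π * ((a - c) * π⁻¹ - d) by field_simp; ring]
    exact (hπ1.mul hd').mono (by push_cast; omega)

theorem finite_digitSums (hA : A.Finite) (N : ℕ) : (digitSums A π N).Finite := by
  induction N with
  | zero => exact Set.finite_singleton 0
  | succ N ih => exact hA.add ih.smul_set

theorem map_eq_self_of_mem_digitSums {conj : k ≃+* k} (hA : ∀ c ∈ A, conj c = c)
    (hπk : conj π = π) {N : ℕ} {c : k} (hc : c ∈ digitSums A π N) : conj c = c := by
  induction N generalizing c with
  | zero => rw [show c = 0 from hc, map_zero]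
  | succ N ih =>
    obtain ⟨a, ha, _, ⟨d, hd, rfl⟩, rfl⟩ := hc
    simp [smul_eq_mul, hA a ha, hπk, ih hd]

end Digits

theorem exists_finite_net {v : k → ℤ} [IsIntValuation v] {π : k} (hπ0 : π ≠ 0) (hπ : v π = 1)
    {S : Finset k} (hS : ∀ a, ValGe v 0 a → ∃ b ∈ S, ValGe v 1 (a - b))
    {ι κ : Type} [Finite ι] [Finite κ] (X : Set (Matrix ι κ k)) (hX : ∀ x ∈ X, MatValGe v 0 x)
    (N : ℕ) :
    ∃ (r : ℕ) (xs : Fin r → Matrix ι κ k),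
      (∀ i, xs i ∈ X) ∧ ∀ y ∈ X, ∃ i, MatValGe v N (y - xs i) := by
  let R := digitSums (S : Set k) π N
  have : Finite R := (finite_digitSums S.finite_toSet N).to_subtype
  have hcode : ∀ y : X, ∃ c : ι → κ → R, ∀ i j, ValGe v N (y.1 i j - c i j) := fun y => by
    choose c hc hc' using fun i j => exists_mem_digitSums_valGe hπ0 hπ hS N (hX y y.2 i j)
    exact ⟨fun i j => ⟨c i j, hc i j⟩, hc'⟩
  choose code hcode using hcode
  obtain ⟨r, ⟨e⟩⟩ := Finite.exists_equiv_fin (Set.range code)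
  refine ⟨r, fun i => ((e.symm i).2.choose : X), fun i => Subtype.prop _, fun y hy => ?_⟩
  have hsame : ∀ x : X, code x = code ⟨y, hy⟩ → MatValGe v N (y - x.1) := fun x hx i j => by
    have hx' := hcode x i j
    rw [hx] at hx'
    rw [Matrix.sub_apply, ← sub_sub_sub_cancel_right _ _ (code ⟨y, hy⟩ i j : k)]
    exact (hcode ⟨y, hy⟩ i j).sub hx'
  refine ⟨e ⟨_, ⟨⟨y, hy⟩, rfl⟩⟩, hsame _ ?_⟩
  rw [(e.symm _).2.choose_spec, Equiv.symm_apply_apply]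

theorem eq_of_valGe_one_sub {v : k → ℤ} {S : Finset k} {b c : k}
    (hb : ∃! b', b' ∈ S ∧ ValGe v 1 (b - b')) (hbS : b ∈ S) (hcS : c ∈ S)
    (hbc : ValGe v 1 (b - c)) : b = c :=
  hb.unique ⟨hbS, by rw [sub_self]; exact .zero⟩ ⟨hcS, hbc⟩

section Trace

variable {v : k → ℤ} [IsIntValuation v] {conj : k ≃+* k}

theorem valGe_one_sub_of_norm (htr : ∀ a, ValGe v 0 a → ValGe v 1 (a + conj a)) {a b : k}
    (ha : ValGe v 0 a) (hb : ValGe v 0 b) (h : ValGe v 1 (conj a * a - conj b * b)) :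
    ValGe v 1 (a - b) := by
  have h2 : ValGe v 1 (2 : k) := by simpa [one_add_one_eq_two] using htr 1 (.one le_rfl)
  apply valGe_one_of_mul_self
  rw [show (a - b) * (a - b) = (a + conj a) * a - (b + conj b) * b - (conj a * a - conj b * b)
    - 2 * (b * (a - b)) by ring]
  exact ((((htr a ha).mul ha).sub ((htr b hb).mul hb)).mono (by norm_num) |>.sub h).sub
    ((h2.mul (hb.mul (ha.sub hb))).mono (by norm_num))

theorem valGe_zero_of_valGe_one_sub {a b : k} (ha : ValGe v 0 a) (hab : ValGe v 1 (a - b)) :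
    ValGe v 0 b := by
  rw [← sub_sub_cancel a b]
  exact ha.sub (hab.mono zero_le_one)

open Classical in
/-- `b ↦ b* b` injects the residues of `k'` into those of `k`. -/
theorem card_filter_le_card_filter_of_trace (hinvol : ∀ a, conj (conj a) = a)
    (hvconj : ∀ a, v (conj a) = v a) {S S' : Finset k}
    (hS : ∀ a, ValGe v 0 a → ∃! b, b ∈ S ∧ ValGe v 1 (a - b))
    (hS' : ∀ a, conj a = a → ValGe v 0 a → ∃! b, b ∈ S' ∧ ValGe v 1 (a - b))
    (htr : ∀ a, ValGe v 0 a → ValGe v 1 (a + conj a)) :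
    (S.filter (ValGe v 0)).card ≤ (S'.filter (ValGe v 0)).card := by
  refine Finset.card_le_card_of_forall_subsingleton (fun b c => ValGe v 1 (conj b * b - c))
    (fun b hb => ?_) fun c _ b₁ hb₁ b₂ hb₂ => ?_
  · have hb0 := (Finset.mem_filter.1 hb).2
    have hN : ValGe v 0 (conj b * b) := by simpa using (hb0.conj hvconj).mul hb0
    obtain ⟨c, ⟨hc, hbc⟩, -⟩ := hS' _ (by simp [hinvol, mul_comm]) hN
    exact ⟨c, Finset.mem_filter.2 ⟨hc, valGe_zero_of_valGe_one_sub hN hbc⟩, hbc⟩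
  · obtain ⟨⟨hb₁S, hb₁0⟩, hbc₁⟩ := And.imp_left Finset.mem_filter.1 hb₁
    obtain ⟨⟨hb₂S, hb₂0⟩, hbc₂⟩ := And.imp_left Finset.mem_filter.1 hb₂
    refine eq_of_valGe_one_sub (hS b₁ hb₁0) hb₁S hb₂S (valGe_one_sub_of_norm htr hb₁0 hb₂0 ?_)
    rw [← sub_sub_sub_cancel_right _ _ c]
    exact hbc₁.sub hbc₂

/-- Comparing the sizes of the finite residue sets, every residue class of `k'` meets `k`. -/
theorem exists_fixed_valGe_one_sub (hinvol : ∀ a, conj (conj a) = a)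
    (hvconj : ∀ a, v (conj a) = v a) {S S' : Finset k}
    (hS : ∀ a, ValGe v 0 a → ∃! b, b ∈ S ∧ ValGe v 1 (a - b)) (hS'fix : ∀ b ∈ S', conj b = b)
    (hS' : ∀ a, conj a = a → ValGe v 0 a → ∃! b, b ∈ S' ∧ ValGe v 1 (a - b))
    (htr : ∀ a, ValGe v 0 a → ValGe v 1 (a + conj a)) {a : k} (ha : ValGe v 0 a) :
    ∃ c, conj c = c ∧ ValGe v 1 (a - c) := by
  classical
  set D := S.filter (ValGe v 0)
  set D' := S'.filter (ValGe v 0)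
  set E := D.filter fun b => ∃ c ∈ D', ValGe v 1 (c - b)
  have hcard : D'.card ≤ E.card := by
    refine Finset.card_le_card_of_forall_subsingleton (fun c b => ValGe v 1 (c - b))
      (fun c hc => ?_) fun b _ c₁ hc₁ c₂ hc₂ => ?_
    · obtain ⟨b, ⟨hb, hcb⟩, -⟩ := hS c (Finset.mem_filter.1 hc).2
      have hb0 := valGe_zero_of_valGe_one_sub (Finset.mem_filter.1 hc).2 hcb
      exact ⟨b, Finset.mem_filter.2 ⟨Finset.mem_filter.2 ⟨hb, hb0⟩, c, hc, hcb⟩, hcb⟩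
    · obtain ⟨⟨hc₁S, hc₁0⟩, hcb₁⟩ := And.imp_left Finset.mem_filter.1 hc₁
      refine eq_of_valGe_one_sub (hS' c₁ (hS'fix c₁ hc₁S) hc₁0) hc₁S
        (Finset.mem_filter.1 hc₂.1).1 ?_
      rw [← sub_sub_sub_cancel_right _ _ b]
      exact hcb₁.sub hc₂.2
  have hE : E = D := Finset.eq_of_subset_of_card_le (Finset.filter_subset _ _)
    ((card_filter_le_card_filter_of_trace hinvol hvconj hS hS' htr).trans hcard)
  obtain ⟨b, ⟨hb, hab⟩, -⟩ := hS a ha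
  have hbE : b ∈ E := hE ▸ Finset.mem_filter.2 ⟨hb, valGe_zero_of_valGe_one_sub ha hab⟩
  obtain ⟨c, hc, hcb⟩ := (Finset.mem_filter.1 hbE).2
  refine ⟨c, hS'fix c (Finset.mem_filter.1 hc).1, ?_⟩
  rw [← sub_add_sub_cancel a b c, ← neg_sub c b]
  exact hab.add hcb.neg

theorem conj_eq_self_of_forall_exists_fixed (hvconj : ∀ a, v (conj a) = v a) {π : k}
    (hπ0 : π ≠ 0) (hπ : v π = 1) (hπk : conj π = π)
    (hfix : ∀ a, ValGe v 0 a → ∃ c, conj c = c ∧ ValGe v 1 (a - c)) (a : k) : conj a = a := by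
  have hint : ∀ a, ValGe v 0 a → conj a = a := fun a ha => by
    refine sub_eq_zero.1 (eq_zero_of_forall_valGe (v := v) fun N => ?_)
    obtain ⟨c, hc, hac⟩ := exists_mem_digitSums_valGe (A := {c | conj c = c}) hπ0 hπ
      (fun a ha => (hfix a ha).imp fun _ => id) N ha
    rw [show conj a - a = conj (a - c) - (a - c) by
      rw [map_sub, map_eq_self_of_mem_digitSums (fun _ => id) hπk hc]; ring]
    exact (hac.conj hvconj).sub hac
  rcases eq_or_ne a 0 with rfl | ha0
  · exact map_zero conj
  rcases le_total 0 (v a) with h | h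
  · exact hint a (Or.inr h)
  · have := hint a⁻¹ (Or.inr (by rw [IsIntValuation.map_inv (v := v) ha0]; omega))
    rwa [map_inv₀, _root_.inv_inj] at this

theorem exists_valGe_zero_add_conj_eq_one (hinvol : ∀ a, conj (conj a) = a)
    (hconj_ne : ∃ a, conj a ≠ a) (hvconj : ∀ a, v (conj a) = v a) {π : k} (hπ0 : π ≠ 0)
    (hπ : v π = 1) (hπk : conj π = π) {S S' : Finset k}
    (hS : ∀ a, ValGe v 0 a → ∃! b, b ∈ S ∧ ValGe v 1 (a - b)) (hS'fix : ∀ b ∈ S', conj b = b)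
    (hS' : ∀ a, conj a = a → ValGe v 0 a → ∃! b, b ∈ S' ∧ ValGe v 1 (a - b)) :
    ∃ θ, ValGe v 0 θ ∧ θ + conj θ = 1 := by
  by_cases htr : ∀ a, ValGe v 0 a → ValGe v 1 (a + conj a)
  · obtain ⟨a, ha⟩ := hconj_ne
    exact absurd (conj_eq_self_of_forall_exists_fixed hvconj hπ0 hπ hπk
      (fun b hb => exists_fixed_valGe_one_sub hinvol hvconj hS hS'fix hS' htr hb) a) ha
  simp only [not_forall] at htr
  obtain ⟨α, hα, hτ⟩ := htr
  set τ := α + conj α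
  obtain ⟨hτ0, hτ1⟩ := not_or.1 hτ
  have hτv : v τ = 0 := by
    have : 0 ≤ v τ := (hα.add (hα.conj hvconj)).resolve_left hτ0
    omega
  have hτfix : conj τ = τ := by simp [τ, hinvol, add_comm]
  have hτinv : ValGe v 0 τ⁻¹ := Or.inr (by rw [IsIntValuation.map_inv (v := v) hτ0, hτv, neg_zero])
  refine ⟨α * τ⁻¹, by simpa using hα.mul hτinv, ?_⟩
  rw [map_mul, map_inv₀, hτfix, ← add_mul, mul_inv_cancel₀ hτ0]

end Trace

section Linearised

variable {v : k → ℤ} [IsIntValuation v] {conj : k ≃+* k} {ι κ : Type} [Fintype ι] [DecidableEq ι]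

/-- `W` is the strict lower triangle of `Φ` plus `θ` times its diagonal. -/
theorem exists_add_ctr_eq {θ : k} (hθ : ValGe v 0 θ) (hθ1 : θ + conj θ = 1)
    {Φ : Matrix ι ι k} (hΦ : ctr conj Φ = Φ) {m : ℤ} (hm : MatValGe v m Φ) : ∃ W, W + ctr conj W = Φ ∧ MatValGe v m W := by
  obtain ⟨N, ⟨e⟩⟩ := Finite.exists_equiv_fin ι
  have hΦ' : ∀ i j, conj (Φ i j) = Φ j i := fun i j => congrFun (congrFun hΦ j) i
  refine ⟨Matrix.of fun i j => if e j < e i then Φ i j else if i = j then θ * Φ i j else 0,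
    ?_, fun i j => ?_⟩
  · ext i j
    simp only [Matrix.add_apply, ctr, Matrix.of_apply]
    rcases lt_trichotomy (e i) (e j) with h | h | h
    · have hij : i ≠ j := fun hij => h.ne (congrArg e hij)
      simp [h.not_gt, h, hij, hΦ']
    · obtain rfl := e.injective h
      simp [hΦ', ← add_mul, hθ1]
    · have hji : j ≠ i := fun hji => h.ne (congrArg e hji)
      simp [h, h.not_gt, hji]
  · simp only [Matrix.of_apply]
    split_ifs
    exacts [hm i j, by simpa using hθ.mul (hm i j), .zero]

variable [Fintype κ] [DecidableEq κ]

/-- With `Q = x P` and `R = 1 - Q`, the condition `x* Δ x = 0` kills the block `Q* Δ Q`, and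
`M = Q* Δ R + R* W R` where `W + W* = R* Δ R`. -/
theorem exists_add_ctr_eq_of_ctr_mul_mul_eq_zero (hinvol : ∀ a, conj (conj a) = a)
    (hvconj : ∀ a, v (conj a) = v a) {θ : k} (hθ : ValGe v 0 θ) (hθ1 : θ + conj θ = 1)
    {x : Matrix ι κ k} {P : Matrix κ ι k} (hPx : P * x = 1) {t : ℕ} (hx : MatValGe v 0 x)
    (hP : MatValGe v (-t) P) {Δ : Matrix ι ι k} (hΔ : ctr conj Δ = Δ)
    (hxΔx : ctr conj x * Δ * x = 0) {m : ℤ} (hm : MatValGe v m Δ) :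
    ∃ M, M * x = 0 ∧ M + ctr conj M = Δ ∧ MatValGe v (m - 4 * t) M := by
  set Q := x * P
  set R := 1 - Q
  have hQx : Q * x = x := by rw [Matrix.mul_assoc, hPx, Matrix.mul_one]
  have hRx : R * x = 0 := by rw [Matrix.sub_mul, Matrix.one_mul, hQx, sub_self]
  have hRR : R * R = R := by
    have hQQ : Q * Q = Q := by rw [← Matrix.mul_assoc, hQx]
    simp only [R, Matrix.sub_mul, Matrix.mul_sub, Matrix.one_mul, Matrix.mul_one, hQQ,
      sub_self, sub_zero]
  have hQΔQ : ctr conj Q * Δ * Q = 0 := by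
    rw [ctr_mul_s19, show ctr conj P * ctr conj x * Δ * (x * P) = ctr conj P * (ctr conj x * Δ * x) * P
      by simp only [Matrix.mul_assoc], hxΔx, Matrix.mul_zero, Matrix.zero_mul]
  have hQ : MatValGe v (-t) Q := (hx.mul hP).mono (by omega)
  have hR : MatValGe v (-t) R := (MatValGe.one (by omega)).sub hQ
  obtain ⟨W, hW, hWm⟩ := exists_add_ctr_eq hθ hθ1 (ctr_ctr_mul_mul hinvol hΔ R)
    (((hR.ctr hvconj).mul hm).mul hR)
  refine ⟨ctr conj Q * Δ * R + ctr conj R * W * R, ?_, ?_, ?_⟩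
  · simp only [Matrix.add_mul, Matrix.mul_assoc, hRx, Matrix.mul_zero, add_zero]
  · have hQR : Q + R = 1 := add_sub_cancel Q 1
    have hQR' : ctr conj Q + ctr conj R = 1 := by rw [← ctr_add, hQR, ctr_one]
    have hRΔR : ctr conj R * (W + ctr conj W) * R = ctr conj R * Δ * R := by
      rw [hW, show ctr conj R * (ctr conj R * Δ * R) * R = ctr conj R * ctr conj R * Δ * (R * R) by
        simp only [Matrix.mul_assoc], ← ctr_mul_s19, hRR]
    calc _ = ctr conj Q * Δ * R + ctr conj R * Δ * Q + ctr conj R * (W + ctr conj W) * R := by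
          simp only [ctr_add, ctr_mul_s19, ctr_ctr hinvol, hΔ]; noncomm_ring
      _ = ctr conj Q * Δ * R + ctr conj R * Δ * Q + ctr conj R * Δ * R + ctr conj Q * Δ * Q := by
          rw [hRΔR, hQΔQ, add_zero]
      _ = (ctr conj Q + ctr conj R) * Δ * (Q + R) := by noncomm_ring
      _ = Δ := by rw [hQR, hQR', Matrix.one_mul, Matrix.mul_one]
  · refine (((hQ.ctr hvconj).mul hm).mul hR).mono (by omega) |>.add ?_
    exact (((hR.ctr hvconj).mul hWm).mul hR).mono (by omega)

end Linearised

section ApproxIsom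

variable {v : k → ℤ} {conj : k ≃+* k} {ι κ : Type} [Fintype ι]

def IsApproxIsom (conj : k ≃+* k) (v : k → ℤ) (H : Matrix ι ι k) (x y : Matrix ι κ k) (m : ℤ)
    (u : Matrix ι ι k) : Prop :=
  MatValGe v 0 u ∧ u * x = y ∧ MatValGe v m (ctr conj u * H * u - H)

theorem IsApproxIsom.mono {H : Matrix ι ι k} {x y : Matrix ι κ k} {m l : ℤ} {u : Matrix ι ι k}
    (hu : IsApproxIsom conj v H x y m u) (h : l ≤ m) : IsApproxIsom conj v H x y l u :=
  ⟨hu.1, hu.2.1, hu.2.2.mono h⟩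

variable [IsIntValuation v]

theorem IsApproxIsom.exists_succ [DecidableEq ι] [Fintype κ] [DecidableEq κ]
    (hinvol : ∀ a, conj (conj a) = a) (hvconj : ∀ a, v (conj a) = v a) {θ : k}
    (hθ : ValGe v 0 θ) (hθ1 : θ + conj θ = 1) {H : Matrix ι ι k} (hH : ctr conj H = H)
    (hHH : H * H = 1) (hH0 : MatValGe v 0 H) {x y : Matrix ι κ k}
    (hxy : ctr conj x * H * x = ctr conj y * H * y) {P : Matrix κ ι k}
    (hPx : P * x = 1) {t : ℕ} (hx : MatValGe v 0 x) (hP : MatValGe v (-t) P) {m : ℤ}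
    (hm : 8 * t + 1 ≤ m) {u : Matrix ι ι k} (hu : IsApproxIsom conj v H x y m u) :
    ∃ u', IsApproxIsom conj v H x y (m + 1) u' ∧ MatValGe v (m - 4 * t) (u' - u) := by
  obtain ⟨hu0, hux, hΔm⟩ := hu
  set Δ := ctr conj u * H * u - H
  have hΔ : ctr conj Δ = Δ := by rw [ctr_sub, ctr_ctr_mul_mul hinvol hH, hH]
  have hxΔx : ctr conj x * Δ * x = 0 := by
    rw [show ctr conj x * Δ * x = ctr conj (u * x) * H * (u * x) - ctr conj x * H * x by
      simp only [Δ, ctr_mul_s19, Matrix.mul_sub, Matrix.sub_mul, Matrix.mul_assoc], hux, hxy, sub_self]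
  obtain ⟨M, hMx, hMM, hMm⟩ :=
    exists_add_ctr_eq_of_ctr_mul_mul_eq_zero hinvol hvconj hθ hθ1 hPx hx hP hΔ hxΔx hΔm
  set C := -(H * M)
  have hCH : ctr conj C * H + H * C = -Δ := by
    rw [← hMM, ctr_neg, ctr_mul_s19, hH, Matrix.neg_mul, Matrix.mul_assoc, hHH, Matrix.mul_one,
      Matrix.mul_neg, ← Matrix.mul_assoc, hHH, Matrix.one_mul]
    abel
  have hC : MatValGe v (m - 4 * t) C := (hH0.mul hMm).neg.mono (by omega)
  have hCu : MatValGe v (m - 4 * t) (u * (1 + C) - u) := by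
    rw [Matrix.mul_add, Matrix.mul_one, add_sub_cancel_left]
    exact (hu0.mul hC).mono (by omega)
  refine ⟨u * (1 + C), ⟨?_, ?_, ?_⟩, hCu⟩
  · simpa using hu0.add (hCu.mono (by omega))
  · rw [Matrix.mul_assoc, Matrix.add_mul, Matrix.one_mul, Matrix.neg_mul, Matrix.mul_assoc, hMx,
      Matrix.mul_zero, neg_zero, add_zero, hux]
  · have hΔ' : ctr conj (u * (1 + C)) * H * (u * (1 + C)) - H
        = ctr conj C * Δ + Δ * C + ctr conj C * H * C + ctr conj C * Δ * C := by
      calc _ = (1 + ctr conj C) * (H + Δ) * (1 + C) - H := by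
            simp only [Δ, ctr_mul_s19, ctr_add, ctr_one, Matrix.mul_assoc, add_sub_cancel]
        _ = (ctr conj C * H + H * C + Δ) + (ctr conj C * Δ + Δ * C + ctr conj C * H * C
            + ctr conj C * Δ * C) := by noncomm_ring
        _ = _ := by rw [hCH, neg_add_cancel, zero_add]
    have hC' := hC.ctr hvconj
    rw [hΔ']
    refine ((((hC'.mul hΔm).mono ?_).add ((hΔm.mul hC).mono ?_)).add
      (((hC'.mul hH0).mul hC).mono ?_)).add (((hC'.mul hΔm).mul hC).mono ?_) <;> omega

theorem IsApproxIsom.of_limit (hvconj : ∀ a, v (conj a) = v a) {H : Matrix ι ι k}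
    (hH0 : MatValGe v 0 H) {x y : Matrix ι κ k} (hx : MatValGe v 0 x) {u : ℕ → Matrix ι ι k}
    (hu : ∀ j : ℕ, IsApproxIsom conj v H x y j (u j)) {g : Matrix ι ι k}
    (hg : ∀ j : ℕ, MatValGe v j (u j - g)) :
    MatValGe v 0 g ∧ ctr conj g * H * g = H ∧ g * x = y := by
  have hg0 : MatValGe v 0 g := by
    simpa using (hu 0).1.sub (hg 0)
  refine ⟨hg0, sub_eq_zero.1 (MatValGe.eq_zero (v := v) fun j => ?_),
    sub_eq_zero.1 (MatValGe.eq_zero (v := v) fun j => ?_)⟩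
  · rw [show ctr conj g * H * g - H = -(ctr conj (u j - g) * H * g)
        - ctr conj (u j) * H * (u j - g) + (ctr conj (u j) * H * u j - H) by
      rw [ctr_sub]; noncomm_ring]
    have h₁ : MatValGe v j (ctr conj (u j - g) * H * g) :=
      (((hg j).ctr hvconj).mul hH0 |>.mul hg0).mono (by simp)
    have h₂ : MatValGe v j (ctr conj (u j) * H * (u j - g)) :=
      (((hu j).1.ctr hvconj).mul hH0 |>.mul (hg j)).mono (by simp)
    exact (h₁.neg.sub h₂).add (hu j).2.2
  · rw [show g * x - y = -((u j - g) * x) by rw [← (hu j).2.1, Matrix.sub_mul, neg_sub]]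
    simpa using ((hg j).mul hx).neg

end ApproxIsom

theorem IsValComplete.exists_isometry_mul_eq {v : k → ℤ} [IsIntValuation v] {conj : k ≃+* k}
    {ι κ : Type} [Fintype ι] [DecidableEq ι] [Fintype κ] [DecidableEq κ] (hc : IsValComplete v)
    (hinvol : ∀ a, conj (conj a) = a) (hvconj : ∀ a, v (conj a) = v a) {θ : k}
    (hθ : ValGe v 0 θ) (hθ1 : θ + conj θ = 1) {H : Matrix ι ι k} (hH : ctr conj H = H)
    (hHH : H * H = 1) (hH0 : MatValGe v 0 H) {x y : Matrix ι κ k}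
    (hxy : ctr conj x * H * x = ctr conj y * H * y) {P : Matrix κ ι k} (hPx : P * x = 1) {t : ℕ}
    (hx : MatValGe v 0 x) (hP : MatValGe v (-t) P) (hclose : MatValGe v (9 * t + 1) (y - x)) :
    ∃ g, MatValGe v 0 g ∧ ctr conj g * H * g = H ∧ g * x = y := by
  have hstep : ∀ (j : ℕ) u, IsApproxIsom conj v H x y (8 * t + 1 + j) u →
      ∃ u', IsApproxIsom conj v H x y (8 * t + 1 + (j + 1 : ℕ)) u' ∧ MatValGe v j (u' - u) :=
    fun j u hu => by
      obtain ⟨u', hu', hdiff⟩ :=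
        hu.exists_succ hinvol hvconj hθ hθ1 hH hHH hH0 hxy hPx hx hP (by omega)
      exact ⟨u', by rwa [Nat.cast_succ, ← add_assoc], hdiff.mono (by omega)⟩
  choose! next hnext hdiff using hstep
  set E := (y - x) * P
  have hE : MatValGe v (8 * t + 1) E := (hclose.mul hP).mono (by omega)
  have hE' := hE.ctr hvconj
  have h0 : IsApproxIsom conj v H x y (8 * t + 1 + (0 : ℕ)) (1 + E) := by
    refine ⟨(MatValGe.one le_rfl).add (hE.mono (by omega)), ?_, ?_⟩
    · rw [Matrix.add_mul, Matrix.one_mul, Matrix.mul_assoc, hPx, Matrix.mul_one,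
        add_sub_cancel]
    · rw [show ctr conj (1 + E) * H * (1 + E) - H = ctr conj E * H + H * E + ctr conj E * H * E by
        rw [ctr_add, ctr_one]; noncomm_ring]
      refine (((hE'.mul hH0).mono ?_).add ((hH0.mul hE).mono ?_)).add
        (((hE'.mul hH0).mul hE).mono ?_) <;> omega
  let u : ℕ → Matrix ι ι k := fun j => Nat.rec (1 + E) next j
  have hu : ∀ j : ℕ, IsApproxIsom conj v H x y (8 * t + 1 + j) (u j) := fun j => by
    induction j with
    | zero => exact h0
    | succ j ih => exact hnext j _ ih
  obtain ⟨g, hg⟩ := hc.exists_matrix_limit (A := u) fun j => hdiff j _ (hu j)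
  exact ⟨g, IsApproxIsom.of_limit hvconj hH0 hx (fun j => (hu j).mono (by omega)) hg⟩

theorem exists_inK_mul_eq {v : k → ℤ} [IsIntValuation v] {conj : k ≃+* k}
    (hc : IsValComplete v) (hinvol : ∀ a, conj (conj a) = a) (hvconj : ∀ a, v (conj a) = v a)
    {θ : k} (hθ : ValGe v 0 θ) (hθ1 : θ + conj θ = 1) {n : ℕ} {T : Matrix (Fin n) (Fin n) k}
    (hT : IsUnit T.det) {t : ℕ} (ht : MatValGe v (-t) T⁻¹)
    {x y : Matrix (Fin n ⊕ Fin n) (Fin n) k} (hx : inXTO conj v T x) (hy : inXTO conj v T y)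
    (hclose : MatValGe v (9 * t + 1) (y - x)) : ∃ g, inK conj v g ∧ y = g * x := by
  have hPx : T⁻¹ * ctr conj x * Hmat k n * x = 1 := by
    rw [Matrix.mul_assoc, Matrix.mul_assoc, ← Matrix.mul_assoc _ _ x, hx.2,
      Matrix.nonsing_inv_mul _ hT]
  have hP : MatValGe v (-t) (T⁻¹ * ctr conj x * Hmat k n) :=
    ((ht.mul (MatValGe.ctr hvconj hx.1)).mul (MatValGe.Hmat le_rfl)).mono (by omega)
  obtain ⟨g, hg0, hgH, hgx⟩ := hc.exists_isometry_mul_eq hinvol hvconj hθ hθ1 ctr_Hmat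
    Hmat_mul_Hmat (MatValGe.Hmat le_rfl) (hx.2.trans hy.2.symm) hPx hx.1 hP hclose
  exact ⟨g, ⟨hg0, hgH, isUnit_det_of_ctr_mul_mul_eq Hmat_mul_Hmat hgH⟩, hgx.symm⟩

theorem stmt19_general
    (q : ℕ)
    {k' : Type} [Field k']
    (conj : k' ≃+* k') (hinvol : ∀ a, conj (conj a) = a) (hconj_ne : ∃ a, conj a ≠ a)
    (v : k' → ℤ) (hv0 : v 0 = 0)
    (hvmul : ∀ a b : k', a ≠ 0 → b ≠ 0 → v (a * b) = v a + v b)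
    (hvadd : ∀ a b : k', a ≠ 0 → b ≠ 0 → a + b ≠ 0 → min (v a) (v b) ≤ v (a + b))
    (hvconj : ∀ a, v (conj a) = v a)
    (π : k') (hπk : conj π = π) (hπv : v π = 1)
    (hres : ∃ S : Finset k', S.card = q ^ 2 ∧
      ∀ a : k', (a = 0 ∨ 0 ≤ v a) → ∃! b, b ∈ S ∧ (a - b = 0 ∨ 1 ≤ v (a - b)))
    (hresk : ∃ S : Finset k', S.card = q ∧ (∀ b ∈ S, conj b = b) ∧
      ∀ a : k', conj a = a → (a = 0 ∨ 0 ≤ v a) → ∃! b, b ∈ S ∧ (a - b = 0 ∨ 1 ≤ v (a - b)))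
    (hcomplete : ∀ f : ℕ → k',
      (∀ m : ℕ, ∃ N : ℕ, ∀ i ≥ N, ∀ j ≥ N, f i - f j = 0 ∨ (m : ℤ) ≤ v (f i - f j)) →
      ∃ L : k', ∀ m : ℕ, ∃ N : ℕ, ∀ i ≥ N, f i - L = 0 ∨ (m : ℤ) ≤ v (f i - L))
    (n : ℕ)
    (T : Matrix (Fin n) (Fin n) k') (hTinv : IsUnit T.det) :
    ∃ (r : ℕ) (xs : Fin r → Matrix (Fin n ⊕ Fin n) (Fin n) k'),
      (∀ i, inXTO conj v T (xs i)) ∧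
      ∀ y : Matrix (Fin n ⊕ Fin n) (Fin n) k', inXTO conj v T y →
        ∃ (i : Fin r) (g : Matrix (Fin n ⊕ Fin n) (Fin n ⊕ Fin n) k'),
          inK conj v g ∧ y = g * xs i := by
  have : IsIntValuation v := ⟨hvmul, hvadd⟩
  have hπ0 : π ≠ 0 := by
    rintro rfl
    rw [hv0] at hπv
    exact zero_ne_one hπv
  obtain ⟨S, -, hS⟩ := hres
  obtain ⟨S', -, hS'fix, hS'⟩ := hresk
  obtain ⟨θ, hθ, hθ1⟩ :=
    exists_valGe_zero_add_conj_eq_one hinvol hconj_ne hvconj hπ0 hπv hπk hS hS'fix hS'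
  obtain ⟨t, ht⟩ := exists_matValGe_neg (v := v) T⁻¹
  obtain ⟨r, xs, hxs, hnet⟩ := exists_finite_net hπ0 hπv (fun a ha => (hS a ha).exists)
    {x | inXTO conj v T x} (fun x hx => hx.1) (9 * t + 1)
  refine ⟨r, xs, hxs, fun y hy => ?_⟩
  obtain ⟨i, hi⟩ := hnet y hy
  obtain ⟨g, hg, hgy⟩ :=
    exists_inK_mul_eq hcomplete hinvol hvconj hθ hθ1 hTinv ht (hxs i) hy (by exact_mod_cast hi)
  exact ⟨i, g, hg, hgy⟩

/-- `𝔛_T(O_{k'})` is a finite union of `K`-orbits. -/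
theorem stmt19
    (q : ℕ) (hq : 1 < q)
    {k' : Type} [Field k'] [CharZero k']
    (conj : k' ≃+* k') (hinvol : ∀ a, conj (conj a) = a) (hconj_ne : ∃ a, conj a ≠ a)
    (v : k' → ℤ) (hv0 : v 0 = 0)
    (hvmul : ∀ a b : k', a ≠ 0 → b ≠ 0 → v (a * b) = v a + v b)
    (hvadd : ∀ a b : k', a ≠ 0 → b ≠ 0 → a + b ≠ 0 → min (v a) (v b) ≤ v (a + b))
    (hvconj : ∀ a, v (conj a) = v a)
    (π : k') (hπk : conj π = π) (hπv : v π = 1)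
    (hres : ∃ S : Finset k', S.card = q ^ 2 ∧
      ∀ a : k', (a = 0 ∨ 0 ≤ v a) → ∃! b, b ∈ S ∧ (a - b = 0 ∨ 1 ≤ v (a - b)))
    (hresk : ∃ S : Finset k', S.card = q ∧ (∀ b ∈ S, conj b = b) ∧
      ∀ a : k', conj a = a → (a = 0 ∨ 0 ≤ v a) → ∃! b, b ∈ S ∧ (a - b = 0 ∨ 1 ≤ v (a - b)))
    (hnormu : ∀ a : k', conj a = a → a ≠ 0 → v a = 0 → ∃ u : k', u ≠ 0 ∧ conj u * u = a)
    (hcomplete : ∀ f : ℕ → k',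
      (∀ m : ℕ, ∃ N : ℕ, ∀ i ≥ N, ∀ j ≥ N, f i - f j = 0 ∨ (m : ℤ) ≤ v (f i - f j)) →
      ∃ L : k', ∀ m : ℕ, ∃ N : ℕ, ∀ i ≥ N, f i - L = 0 ∨ (m : ℤ) ≤ v (f i - L))
    (n : ℕ)
    (T : Matrix (Fin n) (Fin n) k') (hherm : ctr conj T = T) (hTinv : IsUnit T.det) :
    ∃ (r : ℕ) (xs : Fin r → Matrix (Fin n ⊕ Fin n) (Fin n) k'),
      (∀ i, inXTO conj v T (xs i)) ∧
      ∀ y : Matrix (Fin n ⊕ Fin n) (Fin n) k', inXTO conj v T y →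
        ∃ (i : Fin r) (g : Matrix (Fin n ⊕ Fin n) (Fin n ⊕ Fin n) k'),
          inK conj v g ∧ y = g * xs i :=
  stmt19_general q conj hinvol hconj_ne v hv0 hvmul hvadd hvconj π hπk hπv hres hresk hcomplete n T
    hTinv
end
end
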